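/- The set Int(n) of interval partitions is exactly the set of maximal elements of the poset (NC(n), ≪). -/

import Mathlib

open Finset

/-- Partitions of `{1,...,n}`, modelled as finpartitions of `Fin n`. -/
abbrev NCPart (n : ℕ) := Finpartition (Finset.univ : Finset (Fin n))

/-- `i` and `j` lie in the same block of `π`. -/
def SameBlock {n : ℕ} (π : NCPart n) (i j : Fin n) : Prop :=
  ∃ B ∈ π.parts, i ∈ B ∧ j ∈ B

/-- `π` is a non-crossing partition. -/
def IsNoncrossing {n : ℕ} (π : NCPart n) : Prop :=
  ∀ i1 i2 i3 i4 : Fin n, i1 < i2 → i2 < i3 → i3 < i4 →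
    SameBlock π i1 i3 → SameBlock π i2 i4 → SameBlock π i1 i2

/-- `π` is an interval partition: every block is an integer interval. -/
def IsIntervalPart {n : ℕ} (π : NCPart n) : Prop :=
  ∀ B ∈ π.parts, ∃ i j : Fin n, i ≤ j ∧ B = Finset.Icc i j

/-- The nesting order: `V ⊑ W` iff `min W ≤ min V` and `max V ≤ max W`. -/
def Nested {n : ℕ} (V W : Finset (Fin n)) : Prop :=
  W.min ≤ V.min ∧ V.max ≤ W.max

def StrictNested {n : ℕ} (V W : Finset (Fin n)) : Prop :=
  Nested V W ∧ V ≠ W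

/-- An outer block: a block maximal with respect to the nesting order. -/
def IsOuter {n : ℕ} (π : NCPart n) (W : Finset (Fin n)) : Prop :=
  W ∈ π.parts ∧ ∀ V ∈ π.parts, Nested W V → V = W

/-- `P` is the parent block of `V` in `π`. -/
def IsParent {n : ℕ} (π : NCPart n) (V P : Finset (Fin n)) : Prop :=
  P ∈ π.parts ∧ StrictNested V P ∧
    ¬ ∃ V' ∈ π.parts, StrictNested V V' ∧ StrictNested V' P

/-- `π` refines `ρ`: every block of `ρ` is a union of blocks of `π`. -/
def Refines {n : ℕ} (π ρ : NCPart n) : Prop :=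
  ∀ B ∈ π.parts, ∃ C ∈ ρ.parts, B ⊆ C

/-- The partial order `π ≪ ρ`. -/
def LL {n : ℕ} (π ρ : NCPart n) : Prop :=
  Refines π ρ ∧ ∀ W ∈ ρ.parts, ∃ V ∈ π.parts, V ⊆ W ∧ V.min = W.min ∧ V.max = W.max

/-- The colouring `c` is constant on every block of `π`. -/
def MonoChrome {n s : ℕ} (c : Fin n → Fin s) (π : NCPart n) : Prop :=
  ∀ B ∈ π.parts, ∀ i ∈ B, ∀ j ∈ B, c i = c j

/-- Vertical no-repeat property: every inner block has colour different from its parent. -/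
def VNRP {n s : ℕ} (c : Fin n → Fin s) (π : NCPart n) : Prop :=
  ∀ V P : Finset (Fin n), V ∈ π.parts → IsParent π V P →
    ∀ i ∈ V, ∀ j ∈ P, c i ≠ c j

/-- The depth of (the block of) `j` in `π`: the number of blocks strictly nesting it. -/
noncomputable def blockDepth {n : ℕ} (π : NCPart n) (j : Fin n) : ℕ :=
  Set.ncard {W : Finset (Fin n) | W ∈ π.parts ∧ ∃ B ∈ π.parts, j ∈ B ∧ StrictNested B W}

/-- `j` is the maximum of an outer block of `π`. -/
def IsOuterMax {n : ℕ} (π : NCPart n) (j : Fin n) : Prop :=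
  ∃ B, IsOuter π B ∧ j ∈ B ∧ ∀ i ∈ B, i ≤ j

/-- `j` is the minimum of an outer block of `π`. -/
def IsOuterMin {n : ℕ} (π : NCPart n) (j : Fin n) : Prop :=
  ∃ B, IsOuter π B ∧ j ∈ B ∧ ∀ i ∈ B, j ≤ i

/-- Anticommutator-friendly partitions of `{1,...,2n}` (0-indexed: odd numbers
`1,3,...,2n-1` correspond to even indices, and `2n` to index `2n-1`). -/
def ACFriendly (n : ℕ) (π : NCPart (2*n)) : Prop :=
  (∀ j : Fin (2*n), IsOuterMax π j → Even (j : ℕ) ∨ (j : ℕ) = 2*n - 1) ∧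
  (∀ j j' : Fin (2*n), Even (j : ℕ) → (j' : ℕ) = (j : ℕ) + 1 → ¬ IsOuterMax π j →
    blockDepth π j ≠ blockDepth π j')

/-- A pairing: every block has exactly two elements. -/
def IsPairing {n : ℕ} (π : NCPart n) : Prop :=
  ∀ B ∈ π.parts, B.card = 2

/-- A block-projection for `π`. -/
structure BlockProjection {n : ℕ} (π : NCPart n) where
  toFun : {B : Finset (Fin n) // B ∈ π.parts} → {B : Finset (Fin n) // B ∈ π.parts}
  idem : ∀ A, toFun (toFun A) = toFun A
  mono : ∀ A B, Nested A.val B.val → Nested (toFun A).val (toFun B).val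
  le_apply : ∀ A, Nested A.val (toFun A).val

/-!
The maximal elements above a non-crossing `π` are reached by merging each outer block `W` with
everything nested inside it, i.e. by replacing `W` with its hull `[min W, max W]`. Non-crossingness
makes the hulls of distinct outer blocks disjoint, so they form an interval partition `ρ` with
`π ≪ ρ`; a maximal `π` therefore equals `ρ`. Conversely, if `π` is an interval partition and
`π ≪ ρ`, each block of `ρ` lies in the hull of a block of `π` with the same extremes, which is
that block itself, so `ρ = π`.
-/

section Hull

variable {α : Type*} [LinearOrder α] [Fintype α]

def hull (W : Finset α) : Finset α :=
  Finset.univ.filter fun i => W.min ≤ i ∧ (i : WithBot α) ≤ W.max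

lemma mem_hull {W : Finset α} {i : α} :
    i ∈ hull W ↔ W.min ≤ i ∧ (i : WithBot α) ≤ W.max := by
  simp [hull]

lemma subset_hull (W : Finset α) : W ⊆ hull W := fun _ hi =>
  mem_hull.2 ⟨Finset.min_le hi, Finset.le_max hi⟩

lemma hull_subset_Icc [LocallyFiniteOrder α] {W : Finset α} {i j : α} (h : W ⊆ Icc i j) :
    hull W ⊆ Icc i j := by
  intro k hk
  obtain ⟨hmin, hmax⟩ := mem_hull.1 hk
  have hi : (i : WithTop α) ≤ W.min :=
    Finset.le_min fun a ha => WithTop.coe_le_coe.2 (mem_Icc.1 (h ha)).1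
  have hj : W.max ≤ j := Finset.max_le fun a ha => WithBot.coe_le_coe.2 (mem_Icc.1 (h ha)).2
  exact mem_Icc.2 ⟨WithTop.coe_le_coe.1 (hi.trans hmin), WithBot.coe_le_coe.1 (hmax.trans hj)⟩

lemma hull_eq_Icc [LocallyFiniteOrder α] {W : Finset α} (h : W.Nonempty) :
    hull W = Icc (W.min' h) (W.max' h) := by
  ext i
  rw [mem_hull, mem_Icc, ← Finset.coe_min' h, ← Finset.coe_max' h, WithTop.coe_le_coe,
    WithBot.coe_le_coe]

lemma min_hull (W : Finset α) : (hull W).min = W.min :=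
  le_antisymm (Finset.min_mono (subset_hull W)) (Finset.le_min fun _ hb => (mem_hull.1 hb).1)

lemma max_hull (W : Finset α) : (hull W).max = W.max :=
  le_antisymm (Finset.max_le fun _ hb => (mem_hull.1 hb).2) (Finset.max_mono (subset_hull W))

end Hull

lemma Finpartition.eq_of_min_eq {α : Type*} [LinearOrder α] {s : Finset α} (P : Finpartition s)
    {V W : Finset α} (hV : V ∈ P.parts) (hW : W ∈ P.parts) (h : V.min = W.min) : V = W := by
  obtain ⟨a, ha⟩ := Finset.min_of_nonempty (P.nonempty_of_mem_parts hV)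
  exact P.eq_of_mem_parts hV hW (Finset.mem_of_min ha) (Finset.mem_of_min (h ▸ ha))

section

variable {n : ℕ}

lemma nested_refl (W : Finset (Fin n)) : Nested W W :=
  ⟨le_rfl, le_rfl⟩

lemma Nested.trans {U V W : Finset (Fin n)} (h₁ : Nested U V) (h₂ : Nested V W) : Nested U W :=
  ⟨h₂.1.trans h₁.1, h₁.2.trans h₂.2⟩

lemma nested_iff {V W : Finset (Fin n)} (hV : V.Nonempty) (hW : W.Nonempty) :
    Nested V W ↔ W.min' hW ≤ V.min' hV ∧ V.max' hV ≤ W.max' hW := by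
  rw [Nested, ← Finset.coe_min' hV, ← Finset.coe_min' hW, ← Finset.coe_max' hV,
    ← Finset.coe_max' hW, WithTop.coe_le_coe, WithBot.coe_le_coe]

lemma hull_subset_hull {V W : Finset (Fin n)} (h : Nested V W) : hull V ⊆ hull W := fun _ hi =>
  mem_hull.2 ⟨h.1.trans (mem_hull.1 hi).1, (mem_hull.1 hi).2.trans h.2⟩

lemma exists_isOuter_nested (π : NCPart n) {B : Finset (Fin n)} (hB : B ∈ π.parts) :
    ∃ W, IsOuter π W ∧ Nested B W := by
  classical
  -- A block over `B` with the largest hull is outer: any block above it has the same hull, hence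
  -- the same minimum.
  obtain ⟨W, hW, hWmax⟩ := (π.parts.filter (Nested B)).exists_max_image (fun W => #(hull W))
    ⟨B, mem_filter.2 ⟨hB, nested_refl B⟩⟩
  rw [mem_filter] at hW
  refine ⟨W, ⟨hW.1, fun V hV hWV => ?_⟩, hW.2⟩
  have hhull : hull W = hull V := eq_of_subset_of_card_le (hull_subset_hull hWV)
    (hWmax V (mem_filter.2 ⟨hV, hW.2.trans hWV⟩))
  exact π.eq_of_min_eq hV hW.1 (by rw [← min_hull, ← hhull, min_hull])

lemma IsNoncrossing.eq_of_interleave {π : NCPart n} (hπ : IsNoncrossing π)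
    {V W : Finset (Fin n)} (hV : V ∈ π.parts) (hW : W ∈ π.parts) {a b c d : Fin n}
    (ha : a ∈ V) (hc : c ∈ V) (hb : b ∈ W) (hd : d ∈ W) (hab : a ≤ b) (hbc : b ≤ c)
    (hcd : c ≤ d) : V = W := by
  obtain rfl | hab := hab.eq_or_lt
  · exact π.eq_of_mem_parts hV hW ha hb
  obtain rfl | hbc := hbc.eq_or_lt
  · exact π.eq_of_mem_parts hV hW hc hb
  obtain rfl | hcd := hcd.eq_or_lt
  · exact π.eq_of_mem_parts hV hW hc hd
  obtain ⟨U, hU, haU, hbU⟩ := hπ a b c d hab hbc hcd ⟨V, hV, ha, hc⟩ ⟨W, hW, hb, hd⟩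
  exact (π.eq_of_mem_parts hV hU ha haU).trans (π.eq_of_mem_parts hU hW hbU hb)

lemma IsNoncrossing.eq_of_mem_hull_of_isOuter {π : NCPart n} (hπ : IsNoncrossing π)
    {V W : Finset (Fin n)} (hV : IsOuter π V) (hW : IsOuter π W) {k : Fin n}
    (hkV : k ∈ hull V) (hkW : k ∈ hull W) : V = W := by
  have hVne := π.nonempty_of_mem_parts hV.1
  have hWne := π.nonempty_of_mem_parts hW.1
  wlog hmin : V.min' hVne ≤ W.min' hWne generalizing V W
  · exact (this hW hV hkW hkV hWne hVne (le_of_not_ge hmin)).symm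
  rw [hull_eq_Icc hVne, mem_Icc] at hkV
  rw [hull_eq_Icc hWne, mem_Icc] at hkW
  rcases le_or_gt (W.max' hWne) (V.max' hVne) with hmax | hmax
  · exact hW.2 V hV.1 ((nested_iff hWne hVne).2 ⟨hmin, hmax⟩)
  · exact hπ.eq_of_interleave hV.1 hW.1 (min'_mem V hVne) (max'_mem V hVne)
      (min'_mem W hWne) (max'_mem W hWne) hmin (hkW.1.trans hkV.2) hmax.le

open Classical in
noncomputable def outerHulls (π : NCPart n) : Finset (Finset (Fin n)) :=
  {W ∈ π.parts | IsOuter π W}.image hull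

lemma mem_outerHulls {π : NCPart n} {A : Finset (Fin n)} :
    A ∈ outerHulls π ↔ ∃ W, IsOuter π W ∧ hull W = A := by
  simp only [outerHulls, mem_image, mem_filter]
  exact ⟨fun ⟨W, hW, hA⟩ => ⟨W, hW.2, hA⟩,
    fun ⟨W, hW, hA⟩ => ⟨W, ⟨hW.1, hW⟩, hA⟩⟩

lemma existsUnique_mem_outerHulls {π : NCPart n} (hπ : IsNoncrossing π) (k : Fin n) :
    ∃! A, A ∈ outerHulls π ∧ k ∈ A := by
  obtain ⟨B, hB, hkB⟩ := π.exists_mem (mem_univ k)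
  obtain ⟨W, hW, hBW⟩ := exists_isOuter_nested π hB
  have hkW : k ∈ hull W := hull_subset_hull hBW (subset_hull B hkB)
  refine ⟨hull W, ⟨mem_outerHulls.2 ⟨W, hW, rfl⟩, hkW⟩, ?_⟩
  rintro _ ⟨hA, hkA⟩
  obtain ⟨V, hV, rfl⟩ := mem_outerHulls.1 hA
  rw [hπ.eq_of_mem_hull_of_isOuter hV hW hkA hkW]

lemma empty_notMem_outerHulls (π : NCPart n) : ∅ ∉ outerHulls π := by
  rw [mem_outerHulls]
  rintro ⟨W, hW, hWempty⟩
  exact π.ne_empty hW.1 (subset_empty.1 (hWempty ▸ subset_hull W))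

noncomputable def outerHullPart {π : NCPart n} (hπ : IsNoncrossing π) : NCPart n :=
  Finpartition.ofExistsUnique (outerHulls π) (fun _ _ => subset_univ _)
    (fun k _ => existsUnique_mem_outerHulls hπ k) (empty_notMem_outerHulls π)

lemma isIntervalPart_outerHullPart {π : NCPart n} (hπ : IsNoncrossing π) :
    IsIntervalPart (outerHullPart hπ) := by
  intro A hA
  obtain ⟨W, hW, rfl⟩ := mem_outerHulls.1 hA
  have hWne := π.nonempty_of_mem_parts hW.1
  exact ⟨_, _, min'_le W _ (max'_mem W hWne), hull_eq_Icc hWne⟩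

lemma ll_outerHullPart {π : NCPart n} (hπ : IsNoncrossing π) : LL π (outerHullPart hπ) := by
  refine ⟨fun B hB => ?_, fun A hA => ?_⟩
  · obtain ⟨W, hW, hBW⟩ := exists_isOuter_nested π hB
    exact ⟨hull W, mem_outerHulls.2 ⟨W, hW, rfl⟩,
      (subset_hull B).trans (hull_subset_hull hBW)⟩
  · obtain ⟨W, hW, rfl⟩ := mem_outerHulls.1 hA
    exact ⟨W, hW.1, subset_hull W, (min_hull W).symm, (max_hull W).symm⟩

lemma IsIntervalPart.isNoncrossing {π : NCPart n} (h : IsIntervalPart π) : IsNoncrossing π := by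
  rintro i1 i2 i3 - h12 h23 - ⟨B, hB, hi1, hi3⟩ -
  obtain ⟨i, j, -, rfl⟩ := h B hB
  rw [mem_Icc] at hi1 hi3
  exact ⟨_, hB, mem_Icc.2 hi1, mem_Icc.2 ⟨hi1.1.trans h12.le, h23.le.trans hi3.2⟩⟩

lemma IsIntervalPart.eq_of_ll {π ρ : NCPart n} (h : IsIntervalPart π) (hπρ : LL π ρ) :
    ρ = π := by
  have hsub : ρ.parts ⊆ π.parts := by
    intro W hW
    obtain ⟨V, hV, hVW, hmin, hmax⟩ := hπρ.2 W hW
    obtain ⟨i, j, -, hVij⟩ := h V hV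
    have hWV : W ⊆ V := calc
      W ⊆ hull W := subset_hull W
      _ = hull V := by rw [hull, hull, hmin, hmax]
      _ ⊆ V := hVij ▸ hull_subset_Icc subset_rfl
    exact (hVW.antisymm hWV) ▸ hV
  -- `Refines` is the refinement order `≤` of `Finpartition`.
  exact le_antisymm (fun W hW => ⟨W, hsub hW, le_rfl⟩) (fun B hB => hπρ.1 B hB)

end

/-- The interval partitions are exactly the maximal elements of `(NC(n), ≪)`. -/
theorem intervalPart_iff_maximal (n : ℕ) (π : NCPart n) (hπ : IsNoncrossing π) :
    IsIntervalPart π ↔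
      ∀ ρ : NCPart n, IsNoncrossing ρ → LL π ρ → ρ = π := by
  refine ⟨fun hint ρ _ hπρ => hint.eq_of_ll hπρ, fun hmax => ?_⟩
  have hρ := isIntervalPart_outerHullPart hπ
  rw [← hmax _ hρ.isNoncrossing (ll_outerHullPart hπ)]
  exact hρ
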